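/- The SEP-POMDP Bellman operator is a β-contraction. For any bounded functions v, w : S × B → ℝ, sup_{(s, b) ∈ S × B} |(Hv)(s, b) − (Hw)(s, b)| ≤ β * sup_{(s, b) ∈ S × B} |v(s, b) − w(s, b)|. Consequently, since 0 ≤ β < 1, H has a unique bounded fixed point v* : S × B → ℝ with v* = Hv*. -/

import Mathlib

open Finset

/-- The belief simplex over the modulation space `M`. -/
abbrev Belief (M : Type) [Fintype M] : Type :=
  {b : M → ℝ // (∀ μ, 0 ≤ b μ) ∧ ∑ μ, b μ = 1}

/-- A finite SEP-POMDP: feasible action sets, cost function, state transition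
probabilities, modulation/observation probabilities, and a discount factor. -/
structure SEP (S Y M A : Type) [Fintype S] [Fintype Y] [Fintype M] [Fintype A] where
  act : S → Finset A
  act_ne : ∀ s, (act s).Nonempty
  c : S → Y → A → ℝ
  p : Y → S → A → S → ℝ
  p_nonneg : ∀ y' s a s', 0 ≤ p y' s a s'
  p_sum : ∀ y' s a, ∑ s', p y' s a s' = 1
  Q : M → Y → M → ℝ
  Q_nonneg : ∀ μ y' μ', 0 ≤ Q μ y' μ'
  Q_sum : ∀ μ, ∑ y', ∑ μ', Q μ y' μ' = 1
  β : ℝ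
  β_nonneg : 0 ≤ β
  β_lt_one : β < 1

namespace SEP

variable {S Y M A : Type} [Fintype S] [Fintype Y] [Fintype M] [Fintype A]

/-- `σ(y' | b) = ∑ μ, ∑ μ', b μ * Q μ y' μ'`. -/
def sig (P : SEP S Y M A) (b : Belief M) (y' : Y) : ℝ :=
  ∑ μ, ∑ μ', b.1 μ * P.Q μ y' μ'

/-- The Bayesian belief update `λ(y', b)`. -/
noncomputable def lam (P : SEP S Y M A) (y' : Y) (b : Belief M) : Belief M :=
  if h : 0 < P.sig b y' then
    ⟨fun μ' => (∑ μ, b.1 μ * P.Q μ y' μ') / P.sig b y',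
      fun μ' => div_nonneg (Finset.sum_nonneg fun μ _ =>
        mul_nonneg (b.2.1 μ) (P.Q_nonneg μ y' μ')) h.le,
      by
        rw [← Finset.sum_div, Finset.sum_comm]
        exact div_self (ne_of_gt h)⟩
  else b

/-- `h_{y'}(s, a, v̄) = c s y' a + β * ∑ s', p y' s a s' * v̄ s'`. -/
def hy (P : SEP S Y M A) (y' : Y) (s : S) (a : A) (vb : S → ℝ) : ℝ :=
  P.c s y' a + P.β * ∑ s', P.p y' s a s' * vb s'

/-- The Bellman operator `H` of the SEP-POMDP. -/
noncomputable def H (P : SEP S Y M A) (v : S → Belief M → ℝ) (s : S) (b : Belief M) : ℝ :=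
  (P.act s).inf' (P.act_ne s) fun a =>
    ∑ y', P.sig b y' * P.hy y' s a fun s' => v s' (P.lam y' b)

/-- Boundedness of a function `v : S × B → ℝ`. -/
def Bdd (v : S → Belief M → ℝ) : Prop :=
  ∃ C, ∀ s b, |v s b| ≤ C

end SEP

/-!
Since `σ(· | b)` and `p y' s a` are probability vectors, each expected cost
`∑ y', σ(y' | b) * h_{y'}(s, a, v(·, λ(y', b)))` moves by at most `β * K` when `v` moves by at
most `K` uniformly, and a minimum over finitely many actions keeps this bound. Hence `H` is a
`β`-contraction of `ℓ^∞(S × B)`, the Banach space of bounded functions, and Banach's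
fixed-point theorem gives the unique bounded fixed point.
-/

open scoped ENNReal

theorem Finset.abs_inf'_sub_inf'_le {ι α : Type*} [AddCommGroup α] [LinearOrder α]
    [IsOrderedAddMonoid α] {s : Finset ι} (hs : s.Nonempty) {f g : ι → α} {δ : α}
    (h : ∀ i ∈ s, |f i - g i| ≤ δ) : |s.inf' hs f - s.inf' hs g| ≤ δ := by
  rw [abs_sub_le_iff]
  constructor
  · obtain ⟨i, hi, hgi⟩ := s.exists_mem_eq_inf' hs g
    rw [hgi, sub_le_iff_le_add]
    exact (s.inf'_le f hi).trans (sub_le_iff_le_add.mp (abs_sub_le_iff.mp (h i hi)).1)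
  · obtain ⟨i, hi, hfi⟩ := s.exists_mem_eq_inf' hs f
    rw [hfi, sub_le_iff_le_add]
    exact (s.inf'_le g hi).trans (sub_le_iff_le_add.mp (abs_sub_le_iff.mp (h i hi)).2)

theorem Finset.abs_sum_mul_le_of_sum_eq_one {ι α : Type*} [Ring α] [LinearOrder α]
    [IsOrderedRing α] {s : Finset ι} {w f : ι → α} {K : α}
    (hw : ∀ i ∈ s, 0 ≤ w i) (hw₁ : ∑ i ∈ s, w i = 1) (hf : ∀ i ∈ s, |f i| ≤ K) :
    |∑ i ∈ s, w i * f i| ≤ K :=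
  calc |∑ i ∈ s, w i * f i| ≤ ∑ i ∈ s, w i * |f i| := by
        refine (abs_sum_le_sum_abs _ _).trans_eq (sum_congr rfl fun i hi => ?_)
        rw [abs_mul, abs_of_nonneg (hw i hi)]
    _ ≤ ∑ i ∈ s, w i * K := sum_le_sum fun i hi => mul_le_mul_of_nonneg_left (hf i hi) (hw i hi)
    _ = K := by rw [← sum_mul, hw₁, one_mul]

namespace SEP

section Bounded

variable {S M : Type} [Fintype M]

theorem Bdd.bddAbove_abs_sub {v w : S → Belief M → ℝ} (hv : Bdd v) (hw : Bdd w) :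
    BddAbove (Set.range fun x : S × Belief M => |v x.1 x.2 - w x.1 x.2|) := by
  obtain ⟨Cv, hCv⟩ := hv
  obtain ⟨Cw, hCw⟩ := hw
  exact ⟨Cv + Cw, Set.forall_mem_range.2 fun x =>
    (abs_sub _ _).trans (add_le_add (hCv _ _) (hCw _ _))⟩

theorem Bdd.memℓp {v : S → Belief M → ℝ} (hv : Bdd v) :
    Memℓp (fun x : S × Belief M => v x.1 x.2) ∞ := by
  obtain ⟨C, hC⟩ := hv
  exact memℓp_infty_iff.2 ⟨C, Set.forall_mem_range.2 fun x => hC x.1 x.2⟩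

theorem bdd_of_lp (f : lp (fun _ : S × Belief M => ℝ) ∞) : Bdd fun s b => f (s, b) :=
  ⟨‖f‖, fun s b => lp.norm_apply_le_norm ENNReal.top_ne_zero f (s, b)⟩

end Bounded

variable {S Y M A : Type} [Fintype S] [Fintype Y] [Fintype M] [Fintype A]
  (P : SEP S Y M A)

theorem sig_nonneg (b : Belief M) (y' : Y) : 0 ≤ P.sig b y' :=
  sum_nonneg fun μ _ => sum_nonneg fun μ' _ => mul_nonneg (b.2.1 μ) (P.Q_nonneg μ y' μ')

theorem sum_sig (b : Belief M) : ∑ y', P.sig b y' = 1 := by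
  simp only [sig]
  rw [sum_comm]
  simp only [← mul_sum, P.Q_sum, mul_one]
  exact b.2.2

theorem abs_hy_le {y' : Y} {s : S} {a : A} {vb : S → ℝ} {C : ℝ} (hv : ∀ s', |vb s'| ≤ C) :
    |P.hy y' s a vb| ≤ |P.c s y' a| + P.β * C := by
  refine (abs_add_le _ _).trans (add_le_add le_rfl ?_)
  rw [abs_mul, abs_of_nonneg P.β_nonneg]
  exact mul_le_mul_of_nonneg_left
    (abs_sum_mul_le_of_sum_eq_one (fun s' _ => P.p_nonneg y' s a s') (P.p_sum y' s a)
      fun s' _ => hv s') P.β_nonneg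

theorem abs_hy_sub_hy_le {y' : Y} {s : S} {a : A} {vb wb : S → ℝ} {K : ℝ}
    (h : ∀ s', |vb s' - wb s'| ≤ K) :
    |P.hy y' s a vb - P.hy y' s a wb| ≤ P.β * K := by
  simp only [hy, add_sub_add_left_eq_sub, ← mul_sub, ← sum_sub_distrib, abs_mul,
    abs_of_nonneg P.β_nonneg]
  exact mul_le_mul_of_nonneg_left
    (abs_sum_mul_le_of_sum_eq_one (fun s' _ => P.p_nonneg y' s a s') (P.p_sum y' s a)
      fun s' _ => h s') P.β_nonneg

theorem bdd_H {v : S → Belief M → ℝ} (hv : Bdd v) : Bdd (P.H v) := by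
  obtain ⟨C, hC⟩ := hv
  obtain ⟨Cc, hCc⟩ := Finite.bddAbove_range fun t : S × Y × A => |P.c t.1 t.2.1 t.2.2|
  refine ⟨Cc + P.β * C, fun s b => ?_⟩
  obtain ⟨a, -, ha⟩ := (P.act s).exists_mem_eq_inf' (P.act_ne s)
    fun a => ∑ y', P.sig b y' * P.hy y' s a fun s' => v s' (P.lam y' b)
  rw [H, ha]
  exact abs_sum_mul_le_of_sum_eq_one (fun y' _ => P.sig_nonneg b y') (P.sum_sig b)
    fun y' _ => (P.abs_hy_le fun s' => hC s' _).trans (add_le_add_left (hCc ⟨(s, y', a), rfl⟩) _)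

theorem abs_H_sub_H_le {v w : S → Belief M → ℝ} {K : ℝ} (h : ∀ s b, |v s b - w s b| ≤ K)
    (s : S) (b : Belief M) : |P.H v s b - P.H w s b| ≤ P.β * K := by
  refine abs_inf'_sub_inf'_le _ fun a _ => ?_
  simp only [← sum_sub_distrib, ← mul_sub]
  exact abs_sum_mul_le_of_sum_eq_one (fun y' _ => P.sig_nonneg b y') (P.sum_sig b)
    fun y' _ => P.abs_hy_sub_hy_le fun s' => h s' _

noncomputable def HLp (f : lp (fun _ : S × Belief M => ℝ) ∞) :
    lp (fun _ : S × Belief M => ℝ) ∞ :=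
  ⟨fun x => P.H (fun s b => f (s, b)) x.1 x.2, (P.bdd_H (bdd_of_lp f)).memℓp⟩

theorem HLp_apply (f : lp (fun _ : S × Belief M => ℝ) ∞) (x : S × Belief M) :
    P.HLp f x = P.H (fun s b => f (s, b)) x.1 x.2 :=
  rfl

theorem contractingWith_HLp : ContractingWith ⟨P.β, P.β_nonneg⟩ P.HLp := by
  refine ⟨by exact_mod_cast P.β_lt_one, LipschitzWith.of_dist_le_mul fun f g => ?_⟩
  rw [dist_eq_norm, dist_eq_norm]
  refine lp.norm_le_of_forall_le (mul_nonneg P.β_nonneg (norm_nonneg _)) fun x => ?_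
  rw [lp.coeFn_sub, Pi.sub_apply, Real.norm_eq_abs, HLp_apply, HLp_apply]
  refine P.abs_H_sub_H_le (fun s b => ?_) x.1 x.2
  exact lp.norm_apply_le_norm ENNReal.top_ne_zero (f - g) (s, b)

end SEP

theorem bellman_contraction_general
    {S Y M A : Type} [Fintype S] [Fintype Y] [Fintype M] [Fintype A]
    (P : SEP S Y M A) :
    (∀ v w : S → Belief M → ℝ, SEP.Bdd v → SEP.Bdd w →
      (⨆ x : S × Belief M, |P.H v x.1 x.2 - P.H w x.1 x.2|) ≤
        P.β * ⨆ x : S × Belief M, |v x.1 x.2 - w x.1 x.2|) ∧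
    ∃! vstar : S → Belief M → ℝ, SEP.Bdd vstar ∧ ∀ s b, vstar s b = P.H vstar s b := by
  refine ⟨fun v w hv hw => ?_, ?_⟩
  · refine Real.iSup_le (fun x => P.abs_H_sub_H_le (fun s b => ?_) x.1 x.2)
      (mul_nonneg P.β_nonneg (Real.iSup_nonneg fun _ => abs_nonneg _))
    exact le_ciSup (hv.bddAbove_abs_sub hw) (s, b)
  have hc := P.contractingWith_HLp
  set g := ContractingWith.fixedPoint P.HLp hc
  refine ⟨fun s b => g (s, b), ⟨SEP.bdd_of_lp g, fun s b => ?_⟩, ?_⟩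
  · exact (congrArg (fun f : lp _ ∞ => f (s, b)) hc.fixedPoint_isFixedPt).symm
  rintro w ⟨hw, hwfix⟩
  have hw_eq_g : (⟨_, hw.memℓp⟩ : lp _ ∞) = g :=
    hc.fixedPoint_unique (lp.ext (funext fun x => (hwfix x.1 x.2).symm))
  funext s b
  exact congrArg (fun f : lp _ ∞ => f (s, b)) hw_eq_g

/-- **The SEP-POMDP Bellman operator is a β-contraction**, and consequently
has a unique bounded fixed point. -/
theorem bellman_contraction
    {S Y M A : Type} [Fintype S] [Fintype Y] [Fintype M] [Fintype A]
    [Nonempty S] [Nonempty Y] [Nonempty M] [Nonempty A]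
    (P : SEP S Y M A) :
    (∀ v w : S → Belief M → ℝ, SEP.Bdd v → SEP.Bdd w →
      (⨆ x : S × Belief M, |P.H v x.1 x.2 - P.H w x.1 x.2|) ≤
        P.β * ⨆ x : S × Belief M, |v x.1 x.2 - w x.1 x.2|) ∧
    ∃! vstar : S → Belief M → ℝ, SEP.Bdd vstar ∧ ∀ s b, vstar s b = P.H vstar s b :=
  bellman_contraction_general P
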